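/- arXiv:1708.08688 — 5 statements merged into one kernel-verified Lean document; each statement's English description precedes it below -/
import Mathlib

section
/- Let C be a set of symmetric positive definite n×n matrices, L a linear subspace of R^n with dim(L) = l < n, and let L(Σ) = Π_{L⊥} Σ Π_{L⊥} / ‖Π_{L⊥} Σ Π_{L⊥}‖. Suppose Σ̄ is a limit of a sequence L(Σ_m) with Σ_m ∈ C and rank(Σ̄) < n − l. Then the sequence Σ_m^♯ := L(Σ_m) + λ_{l+1}(L(Σ_m))·Π_L converges to Σ̄, i.e., Σ̄ lies in the closure of the set C^♯ := {Σ^♯ : Σ ∈ C}, and Σ̄ is singular. -/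
/-! Since `rank Σ̄ < n - l`, the kernel of `Σ̄` has dimension at least `l + 1`, so by the min–max
principle `λ_{l+1}(A) ≤ sup {xᵀ A x : x ∈ ker Σ̄, ‖x‖ = 1} = sup {xᵀ (A - Σ̄) x : …} ≤ ‖A - Σ̄‖`
(operator norm) for every symmetric `A`. Applied to the positive semidefinite matrices `L(Σ_m) → Σ̄`, the
eigenvalues `λ_{l+1}(L(Σ_m)) ≥ 0` tend to `0`, so the added multiples of `Π_L` vanish in the
limit. Finally `Σ̄` is singular because its rank is smaller than `n`. -/

open Matrix Filter

/-- The `i`-th smallest eigenvalue (0-based, counted with multiplicity) of a real matrix;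
junk value `0` if the matrix is not Hermitian. -/
noncomputable def nthSmallestEigenvalue {n : ℕ} (A : Matrix (Fin n) (Fin n) ℝ) (i : ℕ) : ℝ :=
  if hA : A.IsHermitian then
    (Multiset.sort (↑(List.ofFn hA.eigenvalues)) (· ≤ ·)).getD i 0
  else 0

/-- `P` is the orthogonal projection (matrix) onto the subspace `L` of `ℝⁿ`. -/
def IsProjOnto {n : ℕ} (P : Matrix (Fin n) (Fin n) ℝ) (L : Submodule ℝ (Fin n → ℝ)) : Prop :=
  Pᵀ = P ∧ P * P = P ∧ (∀ x, P.mulVec x ∈ L) ∧ ∀ x ∈ L, P.mulVec x = x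

/-- `ν` is a norm on `n × n` real matrices. -/
def IsMatrixNorm {n : ℕ} (ν : Matrix (Fin n) (Fin n) ℝ → ℝ) : Prop :=
  (∀ A, 0 ≤ ν A) ∧ (∀ A, ν A = 0 ↔ A = 0) ∧
  (∀ (r : ℝ) A, ν (r • A) = |r| * ν A) ∧ ∀ A B, ν (A + B) ≤ ν A + ν B

open Finset Module
open scoped RealInnerProductSpace

theorem List.getD_le_of_lt_countP {α : Type*} [LinearOrder α] {s : List α}
    (hs : s.Pairwise (· ≤ ·)) {a d : α} {k : ℕ} (hk : k < s.countP (· ≤ a)) :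
    s.getD k d ≤ a := by
  induction s generalizing k with
  | nil => simp at hk
  | cons b t ih =>
    rw [List.pairwise_cons] at hs
    rw [List.countP_cons] at hk
    cases k with
    | zero =>
      show b ≤ a
      by_contra! hab
      have ht : t.countP (· ≤ a) = 0 :=
        List.countP_eq_zero.2 fun c hc => by simpa using hab.trans_le (hs.1 c hc)
      simp [ht, hab.not_ge] at hk
    | succ k => exact ih hs.2 (by split_ifs at hk <;> omega)

theorem nthSmallestEigenvalue_le_of_lt_card {n : ℕ} {A : Matrix (Fin n) (Fin n) ℝ}
    (hA : A.IsHermitian) {ε : ℝ} {k : ℕ} (hk : k < #{i | hA.eigenvalues i ≤ ε}) :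
    nthSmallestEigenvalue A k ≤ ε := by
  rw [nthSmallestEigenvalue, dif_pos hA]
  refine List.getD_le_of_lt_countP (Multiset.pairwise_sort _ _) ?_
  rwa [← Multiset.coe_countP, Multiset.sort_eq, ← Fin.univ_val_map, Multiset.countP_map]

theorem nthSmallestEigenvalue_nonneg {n : ℕ} {A : Matrix (Fin n) (Fin n) ℝ} (hA : A.PosSemidef)
    (k : ℕ) : 0 ≤ nthSmallestEigenvalue A k := by
  rw [nthSmallestEigenvalue, dif_pos hA.isHermitian, List.getD_eq_getElem?_getD]
  cases h : (Multiset.sort (↑(List.ofFn hA.isHermitian.eigenvalues) : Multiset ℝ) (· ≤ ·))[k]? with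
  | none => simp
  | some x =>
    have hx := (Multiset.mem_sort _).1 (List.mem_of_getElem? h)
    obtain ⟨i, rfl⟩ := List.mem_ofFn.1 (Multiset.mem_coe.1 hx)
    exact hA.eigenvalues_nonneg i

theorem OrthonormalBasis.inner_eq_zero_of_mem_span_image {ι 𝕜 E : Type*} [Fintype ι] [RCLike 𝕜]
    [NormedAddCommGroup E] [InnerProductSpace 𝕜 E] (b : OrthonormalBasis ι 𝕜 E) {s : Set ι}
    {x : E} (hx : x ∈ Submodule.span 𝕜 (b '' s)) {i : ι} (hi : i ∉ s) :
    inner 𝕜 (b i) x = 0 := by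
  suffices Submodule.span 𝕜 (b '' s) ≤ (𝕜 ∙ b i)ᗮ from
    Submodule.mem_orthogonal_singleton_iff_inner_right.1 (this hx)
  rw [Submodule.span_le]
  rintro _ ⟨j, hj, rfl⟩
  exact Submodule.mem_orthogonal_singleton_iff_inner_right.2
    (b.orthonormal.2 (ne_of_mem_of_not_mem hj hi).symm)

namespace Matrix.IsHermitian

variable {ι : Type*} [Fintype ι] [DecidableEq ι] {A : Matrix ι ι ℝ} (hA : A.IsHermitian)
include hA

theorem toEuclideanLin_eigenvectorBasis (i : ι) :
    toEuclideanLin A (hA.eigenvectorBasis i) = hA.eigenvalues i • hA.eigenvectorBasis i := by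
  simp [toLpLin_apply, hA.mulVec_eigenvectorBasis]

theorem inner_toEuclideanLin_self (x : EuclideanSpace ℝ ι) :
    ⟪x, toEuclideanLin A x⟫ = ∑ i, hA.eigenvalues i * ⟪hA.eigenvectorBasis i, x⟫ ^ 2 := by
  rw [← hA.eigenvectorBasis.sum_inner_mul_inner]
  refine Finset.sum_congr rfl fun i _ => ?_
  rw [← isSymmetric_toEuclideanLin_iff.mpr hA, hA.toEuclideanLin_eigenvectorBasis,
    real_inner_smul_left, real_inner_comm x]
  ring

theorem lt_inner_toEuclideanLin_self_of_mem_span {ε : ℝ} {x : EuclideanSpace ℝ ι}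
    (hx : x ∈ Submodule.span ℝ (hA.eigenvectorBasis '' {i | ε < hA.eigenvalues i}))
    (hx₀ : x ≠ 0) : ε * ‖x‖ ^ 2 < ⟪x, toEuclideanLin A x⟫ := by
  set b := hA.eigenvectorBasis
  have hvanish : ∀ i, hA.eigenvalues i ≤ ε → ⟪b i, x⟫ = 0 := fun i hi =>
    b.inner_eq_zero_of_mem_span_image hx (not_lt.2 hi)
  obtain ⟨i, hi⟩ : ∃ i, ⟪b i, x⟫ ≠ 0 := by
    by_contra! h
    exact hx₀ (b.toBasis.ext_elem fun i => by simp [b.repr_apply_apply, h])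
  have hterm : ∀ j, 0 ≤ (hA.eigenvalues j - ε) * ⟪b j, x⟫ ^ 2 := fun j => by
    rcases le_or_gt (hA.eigenvalues j) ε with hj | hj
    · simp [hvanish j hj]
    · exact mul_nonneg (sub_nonneg.2 hj.le) (sq_nonneg _)
  have hpos : 0 < ∑ j, (hA.eigenvalues j - ε) * ⟪b j, x⟫ ^ 2 :=
    Finset.sum_pos' (fun j _ => hterm j) ⟨i, mem_univ i, mul_pos
      (sub_pos.2 (not_le.1 (mt (hvanish i) hi))) (sq_pos_of_ne_zero hi)⟩
  rw [hA.inner_toEuclideanLin_self, ← b.sum_sq_inner_right, Finset.mul_sum]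
  simp only [sub_mul, Finset.sum_sub_distrib] at hpos
  linarith

/-- The easy half of Courant–Fischer: `V` meets the span of the eigenvectors with eigenvalue
`> ε` only in `0`. -/
theorem finrank_le_card_eigenvalues_le {ε : ℝ} {V : Submodule ℝ (EuclideanSpace ℝ ι)}
    (hV : ∀ x ∈ V, ⟪x, toEuclideanLin A x⟫ ≤ ε * ‖x‖ ^ 2) :
    finrank ℝ V ≤ #{i | hA.eigenvalues i ≤ ε} := by
  set s := {i | ε < hA.eigenvalues i}
  have hdisj : Disjoint V (Submodule.span ℝ (hA.eigenvectorBasis '' s)) := by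
    refine Submodule.disjoint_def.2 fun x hxV hxW => ?_
    by_contra hx₀
    exact (hV x hxV).not_gt (hA.lt_inner_toEuclideanLin_self_of_mem_span hxW hx₀)
  have hspan :
      finrank ℝ (Submodule.span ℝ (hA.eigenvectorBasis '' s)) = #{i | ε < hA.eigenvalues i} := by
    rw [Set.image_eq_range, finrank_span_eq_card (b := fun i : s => hA.eigenvectorBasis i)
      (hA.eigenvectorBasis.orthonormal.linearIndependent.comp _ Subtype.val_injective)]
    simp [s, Fintype.card_subtype]
  have hcard := card_filter_add_card_filter_not (s := univ) (fun i => hA.eigenvalues i ≤ ε)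
  have hsum := Submodule.finrank_add_finrank_le_of_disjoint hdisj
  simp only [not_le, card_univ] at hcard
  rw [hspan, finrank_euclideanSpace] at hsum
  omega

end Matrix.IsHermitian

section L2OpNorm

open scoped Matrix.Norms.L2Operator

theorem nthSmallestEigenvalue_le_l2_opNorm_sub {n : ℕ} {A B : Matrix (Fin n) (Fin n) ℝ}
    (hA : A.IsHermitian) {k : ℕ} (hk : k + B.rank < n) :
    nthSmallestEigenvalue A k ≤ ‖A - B‖ := by
  have hker : k < finrank ℝ (LinearMap.ker (toEuclideanLin B)) := by
    have hrank : B.rank = finrank ℝ (LinearMap.range (toEuclideanLin B)) := by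
      rw [toEuclideanLin_eq_toLin_orthonormal]
      exact B.rank_eq_finrank_range_toLin _ _
    have := LinearMap.finrank_range_add_finrank_ker (toEuclideanLin B)
    rw [finrank_euclideanSpace_fin] at this
    omega
  refine nthSmallestEigenvalue_le_of_lt_card hA
    (hker.trans_le (hA.finrank_le_card_eigenvalues_le fun x hx => ?_))
  calc ⟪x, toEuclideanLin A x⟫ = ⟪x, toEuclideanLin (A - B) x⟫ := by
        rw [map_sub, LinearMap.sub_apply, LinearMap.mem_ker.1 hx, sub_zero]
    _ ≤ ‖x‖ * ‖toEuclideanLin (A - B) x‖ := real_inner_le_norm _ _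
    _ ≤ ‖x‖ * (‖A - B‖ * ‖x‖) :=
        mul_le_mul_of_nonneg_left ((toEuclideanCLM (n := Fin n) (𝕜 := ℝ) (A - B)).le_opNorm x)
          (norm_nonneg x)
    _ = ‖A - B‖ * ‖x‖ ^ 2 := by ring

end L2OpNorm

theorem tendsto_nthSmallestEigenvalue_zero_of_rank_lt {n k : ℕ}
    {A : ℕ → Matrix (Fin n) (Fin n) ℝ} {B : Matrix (Fin n) (Fin n) ℝ}
    (hA : ∀ m, (A m).PosSemidef) (hAB : Tendsto A atTop (nhds B)) (hk : k + B.rank < n) :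
    Tendsto (fun m => nthSmallestEigenvalue (A m) k) atTop (nhds 0) := by
  open scoped Matrix.Norms.L2Operator in
  exact squeeze_zero (fun m => nthSmallestEigenvalue_nonneg (hA m) k)
    (fun m => nthSmallestEigenvalue_le_l2_opNorm_sub (hA m).isHermitian hk)
    (tendsto_iff_norm_sub_tendsto_zero.1 hAB)

theorem stmt_3_general {n l : ℕ}
    (L : Submodule ℝ (Fin n → ℝ))
    (C : Set (Matrix (Fin n) (Fin n) ℝ)) (hC : ∀ A ∈ C, A.PosDef)
    (P : Matrix (Fin n) (Fin n) ℝ) (hP : IsProjOnto P L)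
    (ν : Matrix (Fin n) (Fin n) ℝ → ℝ) (hν : IsMatrixNorm ν)
    (LS : Matrix (Fin n) (Fin n) ℝ → Matrix (Fin n) (Fin n) ℝ)
    (hLS : ∀ A, LS A =
      (ν (((1 : Matrix (Fin n) (Fin n) ℝ) - P) * A * ((1 : Matrix (Fin n) (Fin n) ℝ) - P)))⁻¹ •
        (((1 : Matrix (Fin n) (Fin n) ℝ) - P) * A * ((1 : Matrix (Fin n) (Fin n) ℝ) - P)))
    (Sbar : Matrix (Fin n) (Fin n) ℝ)
    (Sm : ℕ → Matrix (Fin n) (Fin n) ℝ) (hSm : ∀ m, Sm m ∈ C)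
    (hconv : Tendsto (fun m => LS (Sm m)) atTop (nhds Sbar))
    (hrank : Sbar.rank < n - l) :
    Tendsto (fun m => LS (Sm m) + nthSmallestEigenvalue (LS (Sm m)) l • P)
      atTop (nhds Sbar) ∧
    Sbar ∈ closure {B | ∃ A ∈ C, B = LS A + nthSmallestEigenvalue (LS A) l • P} ∧
    Sbar.det = 0 := by
  have hQ : (1 - P)ᴴ = 1 - P := by
    rw [conjTranspose_eq_transpose_of_trivial, transpose_sub, transpose_one, hP.1]
  have hpsd : ∀ A ∈ C, (LS A).PosSemidef := fun A hA => by
    have := (hC A hA).posSemidef.conjTranspose_mul_mul_same (1 - P)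
    rw [hQ] at this
    rw [hLS A]
    exact this.smul (inv_nonneg.2 (hν.1 _))
  have hsharp : Tendsto (fun m => LS (Sm m) + nthSmallestEigenvalue (LS (Sm m)) l • P)
      atTop (nhds Sbar) := by
    have hEig := tendsto_nthSmallestEigenvalue_zero_of_rank_lt (k := l)
      (fun m => hpsd _ (hSm m)) hconv (by omega)
    simpa using hconv.add (hEig.smul_const P)
  refine ⟨hsharp, mem_closure_of_tendsto hsharp (.of_forall fun m => ⟨Sm m, hSm m, rfl⟩), ?_⟩
  by_contra hdet
  have := Sbar.rank_of_isUnit ((isUnit_iff_isUnit_det Sbar).2 (isUnit_iff_ne_zero.2 hdet))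
  rw [Fintype.card_fin] at this
  omega

theorem stmt_3 {n l : ℕ} (hln : l < n)
    (L : Submodule ℝ (Fin n → ℝ)) (hL : Module.finrank ℝ L = l)
    (C : Set (Matrix (Fin n) (Fin n) ℝ)) (hC : ∀ A ∈ C, A.PosDef)
    (P : Matrix (Fin n) (Fin n) ℝ) (hP : IsProjOnto P L)
    (ν : Matrix (Fin n) (Fin n) ℝ → ℝ) (hν : IsMatrixNorm ν)
    (LS : Matrix (Fin n) (Fin n) ℝ → Matrix (Fin n) (Fin n) ℝ)
    (hLS : ∀ A, LS A =
      (ν (((1 : Matrix (Fin n) (Fin n) ℝ) - P) * A * ((1 : Matrix (Fin n) (Fin n) ℝ) - P)))⁻¹ •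
        (((1 : Matrix (Fin n) (Fin n) ℝ) - P) * A * ((1 : Matrix (Fin n) (Fin n) ℝ) - P)))
    (Sbar : Matrix (Fin n) (Fin n) ℝ)
    (Sm : ℕ → Matrix (Fin n) (Fin n) ℝ) (hSm : ∀ m, Sm m ∈ C)
    (hconv : Tendsto (fun m => LS (Sm m)) atTop (nhds Sbar))
    (hrank : Sbar.rank < n - l) :
    Tendsto (fun m => LS (Sm m) + nthSmallestEigenvalue (LS (Sm m)) l • P)
      atTop (nhds Sbar) ∧
    Sbar ∈ closure {B | ∃ A ∈ C, B = LS A + nthSmallestEigenvalue (LS A) l • P} ∧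
    Sbar.det = 0 :=
  stmt_3_general L C hC P hP ν hν LS hLS Sbar Sm hSm hconv hrank
end

section
/- Let X be an n×k real matrix of rank k with k < n, R a q×k real matrix of rank q ≥ 1, and let M₀^lin = {Xβ : β ∈ R^k, Rβ = 0}. Let β̂_X(y) = (X'X)^{-1}X'y be the OLS estimator. If s ∈ R^n is orthogonal to M₀^lin, then the orthogonal projection Π_{span(X)}s is also orthogonal to M₀^lin, R β̂_X(s) = R β̂_X(Π_{span(X)}s), and R β̂_X(s) = 0 holds if and only if Π_{span(X)}s = 0. Consequently, for any linear subspace S ⊆ (M₀^lin)^⊥, one has {s ∈ S : R β̂_X(s) = 0} = S ∩ ker(Π_{span(X)}). -/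
open Matrix

theorem stmt_5 {n k q : ℕ} (hkn : k < n) (hq : 1 ≤ q)
    (X : Matrix (Fin n) (Fin k) ℝ) (hX : X.rank = k)
    (R : Matrix (Fin q) (Fin k) ℝ) (hR : R.rank = q)
    (P : Matrix (Fin n) (Fin n) ℝ)
    (hPsym : Pᵀ = P) (hPidem : P * P = P)
    (hPrange : ∀ y, ∃ η, P.mulVec y = X.mulVec η)
    (hPfix : ∀ η, P.mulVec (X.mulVec η) = X.mulVec η)
    (βhat : (Fin n → ℝ) → (Fin k → ℝ))
    (hβhat : ∀ y, βhat y = (Xᵀ * X)⁻¹.mulVec (Xᵀ.mulVec y)) :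
    (∀ s : Fin n → ℝ,
      (∀ β : Fin k → ℝ, R.mulVec β = 0 → s ⬝ᵥ X.mulVec β = 0) →
      ((∀ β : Fin k → ℝ, R.mulVec β = 0 → (P.mulVec s) ⬝ᵥ X.mulVec β = 0) ∧
       R.mulVec (βhat s) = R.mulVec (βhat (P.mulVec s)) ∧
       (R.mulVec (βhat s) = 0 ↔ P.mulVec s = 0))) ∧
    ∀ S : Submodule ℝ (Fin n → ℝ),
      (∀ s ∈ S, ∀ β : Fin k → ℝ, R.mulVec β = 0 → s ⬝ᵥ X.mulVec β = 0) →
      {s : Fin n → ℝ | s ∈ S ∧ R.mulVec (βhat s) = 0} =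
        {s : Fin n → ℝ | s ∈ S ∧ P.mulVec s = 0} := by
  -- P * X = X as matrices
  have hPX : P * X = X := by
    ext i j
    have h := congrFun (hPfix (Pi.single j 1)) i
    rw [mulVec_single_one] at h
    simp only [mulVec, mul_apply, dotProduct, transpose_apply] at h ⊢
    exact h
  -- Xᵀ * P = Xᵀ
  have hXtP : Xᵀ * P = Xᵀ := by
    calc Xᵀ * P = Xᵀ * Pᵀ := by rw [hPsym]
    _ = (P * X)ᵀ := by rw [transpose_mul]
    _ = Xᵀ := by rw [hPX]
  -- symmetric matrices move across dot products
  have hsym : ∀ (v w : Fin n → ℝ), P.mulVec v ⬝ᵥ w = v ⬝ᵥ P.mulVec w := by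
    intro v w
    rw [← hPsym, mulVec_transpose, hPsym, dotProduct_mulVec]
  -- X has trivial kernel
  have hkerX : LinearMap.ker X.mulVecLin = ⊥ := by
    have h := LinearMap.finrank_range_add_finrank_ker X.mulVecLin
    have hr : Module.finrank ℝ (LinearMap.range X.mulVecLin) = k := hX
    rw [hr, Module.finrank_fintype_fun_eq_card, Fintype.card_fin] at h
    have : Module.finrank ℝ (LinearMap.ker X.mulVecLin) = 0 := by omega
    exact Submodule.finrank_eq_zero.mp this
  -- Xᵀ * X is invertible
  have hunit : IsUnit (Xᵀ * X) := by
    rw [← mulVec_injective_iff_isUnit]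
    have : LinearMap.ker (Xᵀ * X).mulVecLin = ⊥ := by
      rw [ker_mulVecLin_transpose_mul_self]; exact hkerX
    exact fun a b hab => LinearMap.ker_eq_bot.mp this hab
  have hinv : (Xᵀ * X)⁻¹ * (Xᵀ * X) = 1 :=
    nonsing_inv_mul _ ((isUnit_iff_isUnit_det _).mp hunit)
  -- βhat is invariant under P
  have hbb : ∀ s, βhat (P.mulVec s) = βhat s := by
    intro s
    rw [hβhat, hβhat, show Xᵀ *ᵥ (P *ᵥ s) = (Xᵀ * P) *ᵥ s from mulVec_mulVec .., hXtP]
  -- X *ᵥ βhat s = P *ᵥ s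
  have hXb : ∀ s, X.mulVec (βhat s) = P.mulVec s := by
    intro s
    obtain ⟨η, hη⟩ := hPrange s
    have : βhat s = η := by
      rw [← hbb s, hη, hβhat, mulVec_mulVec, mulVec_mulVec, Matrix.mul_assoc,
        hinv, one_mulVec]
    rw [this, ← hη]
  constructor
  · intro s hs
    have h1 : ∀ β : Fin k → ℝ, R.mulVec β = 0 → (P.mulVec s) ⬝ᵥ X.mulVec β = 0 := by
      intro β hβ
      rw [hsym, hPfix]
      exact hs β hβ
    refine ⟨h1, by rw [hbb], ?_⟩
    constructor
    · intro hRb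
      have h0 : s ⬝ᵥ X.mulVec (βhat s) = 0 := hs _ hRb
      rw [hXb] at h0
      have : P.mulVec s ⬝ᵥ P.mulVec s = 0 := by
        rw [hsym, mulVec_mulVec, hPidem]
        exact h0
      exact dotProduct_self_eq_zero.mp this
    · intro hPs
      have : βhat s = 0 := by
        rw [← hbb, hPs, hβhat]
        simp
      rw [this, mulVec_zero]
  · intro S hS
    ext s
    simp only [Set.mem_setOf_eq, and_congr_right_iff]
    intro hsS
    have hs := hS s hsS
    have h1 : ∀ β : Fin k → ℝ, R.mulVec β = 0 → (P.mulVec s) ⬝ᵥ X.mulVec β = 0 := by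
      intro β hβ
      rw [hsym, hPfix]; exact hs β hβ
    constructor
    · intro hRb
      have h0 : s ⬝ᵥ X.mulVec (βhat s) = 0 := hs _ hRb
      rw [hXb] at h0
      have : P.mulVec s ⬝ᵥ P.mulVec s = 0 := by
        rw [hsym, mulVec_mulVec, hPidem]; exact h0
      exact dotProduct_self_eq_zero.mp this
    · intro hPs
      have : βhat s = 0 := by
        rw [← hbb, hPs, hβhat]; simp
      rw [this, mulVec_zero]
end

section
/- Let X be an n×k real matrix of rank k (k < n) and let g : R^n → R satisfy g(δy + Xη) = δ²g(y) for every y ∈ R^n, every δ ≠ 0, and every η ∈ R^k, and assume g is Borel measurable. Then for every μ ∈ span(X) and every σ ∈ (0, ∞), the Gaussian probability P_{μ, σ²I_n}(g ≥ 0) equals P_{0, I_n}(g ≥ 0), where P_{μ, Σ} denotes the N(μ, Σ) distribution on R^n. -/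
open Matrix MeasureTheory

/-- The Gaussian measure `N(μ, S)` on `ℝⁿ`, defined through its Lebesgue density. -/
noncomputable def gaussianMeasure {n : ℕ} (μ : Fin n → ℝ) (S : Matrix (Fin n) (Fin n) ℝ) :
    Measure (Fin n → ℝ) :=
  volume.withDensity fun y =>
    ENNReal.ofReal (Real.sqrt (((2 * Real.pi) ^ n * S.det)⁻¹) *
      Real.exp (-(1 / 2) * ((y - μ) ⬝ᵥ S⁻¹.mulVec (y - μ))))

/-! The affine map `z ↦ σ • z + μ` pushes `N(0, I)` forward to `N(μ, σ² I)`: Lebesgue measure is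
scaled by `σ⁻ⁿ` under this map, which exactly compensates the factor `σⁿ` between the two
densities. When `μ` lies in the span of `X`, the homogeneity of `g` makes `{g ≥ 0}` invariant
under the same map. -/

open scoped ENNReal

theorem map_withDensity_comp {α β : Type*} [MeasurableSpace α] [MeasurableSpace β]
    {T : α → β} (hT : Measurable T) {f : β → ℝ≥0∞} (hf : Measurable f) (ν : Measure α) :
    (ν.withDensity (f ∘ T)).map T = (ν.map T).withDensity f := by
  ext s hs
  rw [Measure.map_apply hT hs, withDensity_apply _ (hT hs), withDensity_apply _ hs,
    setLIntegral_map hs hf hT, Function.comp_def]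

theorem map_addHaar_smul_add {E : Type*} [NormedAddCommGroup E] [NormedSpace ℝ E]
    [MeasurableSpace E] [BorelSpace E] [FiniteDimensional ℝ E] (μ : Measure E)
    [μ.IsAddHaarMeasure] {r : ℝ} (hr : r ≠ 0) (v : E) :
    μ.map (fun z => r • z + v) = ENNReal.ofReal |(r ^ Module.finrank ℝ E)⁻¹| • μ := by
  have hcomp : (fun z => r • z + v) = (· + v) ∘ (r • ·) := rfl
  rw [hcomp, ← Measure.map_map (measurable_add_const v) (measurable_const_smul r),
    Measure.map_addHaar_smul μ hr, Measure.map_smul, (measurePreserving_add_right μ v).map_eq]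

noncomputable def gaussianDensity {n : ℕ} (μ : Fin n → ℝ) (S : Matrix (Fin n) (Fin n) ℝ)
    (y : Fin n → ℝ) : ℝ≥0∞ :=
  ENNReal.ofReal (Real.sqrt (((2 * Real.pi) ^ n * S.det)⁻¹) *
    Real.exp (-(1 / 2) * ((y - μ) ⬝ᵥ S⁻¹.mulVec (y - μ))))

theorem gaussianMeasure_eq_withDensity {n : ℕ} (μ : Fin n → ℝ) (S : Matrix (Fin n) (Fin n) ℝ) :
    gaussianMeasure μ S = volume.withDensity (gaussianDensity μ S) := rfl

theorem measurable_gaussianDensity {n : ℕ} (μ : Fin n → ℝ) (S : Matrix (Fin n) (Fin n) ℝ) :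
    Measurable (gaussianDensity μ S) := by
  unfold gaussianDensity dotProduct
  fun_prop

theorem gaussianDensity_zero_one_eq_pow_mul {n : ℕ} {σ : ℝ} (hσ : 0 < σ) (μ z : Fin n → ℝ) :
    gaussianDensity 0 1 z =
      ENNReal.ofReal (σ ^ n) * gaussianDensity μ (σ ^ 2 • 1) (σ • z + μ) := by
  have hσ2 : σ ^ 2 ≠ 0 := by positivity
  have hdet : (σ ^ 2 • (1 : Matrix (Fin n) (Fin n) ℝ)).det = (σ ^ n) ^ 2 := by
    rw [Matrix.det_smul, Matrix.det_one, mul_one, Fintype.card_fin, ← pow_mul, ← pow_mul, mul_comm]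
  have hinv : (σ ^ 2 • (1 : Matrix (Fin n) (Fin n) ℝ))⁻¹ = (σ ^ 2)⁻¹ • 1 := by
    exact Matrix.inv_eq_right_inv (by simp [smul_smul, hσ2])
  have hquad :
      (σ • z) ⬝ᵥ ((σ ^ 2)⁻¹ • (1 : Matrix (Fin n) (Fin n) ℝ)).mulVec (σ • z) = z ⬝ᵥ z := by
    rw [Matrix.smul_mulVec, Matrix.one_mulVec, smul_dotProduct, dotProduct_smul, dotProduct_smul,
      smul_eq_mul, smul_eq_mul, smul_eq_mul]
    field_simp
  unfold gaussianDensity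
  rw [← ENNReal.ofReal_mul (by positivity), add_sub_cancel_right, hdet, hinv, hquad,
    Matrix.det_one, mul_one, sub_zero, inv_one, Matrix.one_mulVec, mul_inv,
    Real.sqrt_mul (by positivity), Real.sqrt_inv ((σ ^ n) ^ 2), Real.sqrt_sq (by positivity)]
  field_simp

theorem gaussianMeasure_smul_one_eq_map {n : ℕ} (μ : Fin n → ℝ) {σ : ℝ} (hσ : 0 < σ) :
    gaussianMeasure μ (σ ^ 2 • 1) = (gaussianMeasure 0 1).map (fun z => σ • z + μ) := by
  have hT : Measurable fun z : Fin n → ℝ => σ • z + μ := by fun_prop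
  have hdensity : gaussianDensity 0 1 =
      ENNReal.ofReal (σ ^ n) • (gaussianDensity μ (σ ^ 2 • 1) ∘ fun z => σ • z + μ) :=
    funext (gaussianDensity_zero_one_eq_pow_mul hσ μ)
  rw [gaussianMeasure_eq_withDensity, gaussianMeasure_eq_withDensity, hdensity,
    withDensity_smul' _ _ ENNReal.ofReal_ne_top, Measure.map_smul,
    map_withDensity_comp hT (measurable_gaussianDensity _ _), map_addHaar_smul_add _ hσ.ne',
    withDensity_smul_measure, smul_smul, Module.finrank_fin_fun, abs_of_pos (by positivity),
    ← ENNReal.ofReal_mul (by positivity), mul_inv_cancel₀ (by positivity), ENNReal.ofReal_one,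
    one_smul]

theorem stmt_9_general {n k : ℕ}
    (X : Matrix (Fin n) (Fin k) ℝ)
    (g : (Fin n → ℝ) → ℝ)
    (hg : ∀ (y : Fin n → ℝ) (δ : ℝ), δ ≠ 0 → ∀ η : Fin k → ℝ,
      g (δ • y + X.mulVec η) = δ ^ 2 * g y) :
    ∀ (η : Fin k → ℝ) (σ : ℝ), 0 < σ →
      gaussianMeasure (X.mulVec η) (σ ^ 2 • (1 : Matrix (Fin n) (Fin n) ℝ))
          {y | 0 ≤ g y} =
        gaussianMeasure 0 (1 : Matrix (Fin n) (Fin n) ℝ) {y | 0 ≤ g y} := by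
  intro η σ hσ
  have hT : MeasurableEmbedding fun z : Fin n → ℝ => σ • z + X.mulVec η :=
    (measurableEmbedding_addRight _).comp (measurableEmbedding_const_smul₀ hσ.ne')
  have hpreimage : (fun z => σ • z + X.mulVec η) ⁻¹' {y | 0 ≤ g y} = {y | 0 ≤ g y} := by
    ext z
    simp only [Set.mem_preimage, Set.mem_ofPred_eq, hg z σ hσ.ne' η]
    exact mul_nonneg_iff_of_pos_left (by positivity)
  rw [gaussianMeasure_smul_one_eq_map _ hσ, hT.map_apply, hpreimage]

theorem stmt_9 {n k : ℕ} (hkn : k < n)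
    (X : Matrix (Fin n) (Fin k) ℝ) (hX : X.rank = k)
    (g : (Fin n → ℝ) → ℝ) (hmeas : Measurable g)
    (hg : ∀ (y : Fin n → ℝ) (δ : ℝ), δ ≠ 0 → ∀ η : Fin k → ℝ,
      g (δ • y + X.mulVec η) = δ ^ 2 * g y) :
    ∀ (η : Fin k → ℝ) (σ : ℝ), 0 < σ →
      gaussianMeasure (X.mulVec η) (σ ^ 2 • (1 : Matrix (Fin n) (Fin n) ℝ))
          {y | 0 ≤ g y} =
        gaussianMeasure 0 (1 : Matrix (Fin n) (Fin n) ℝ) {y | 0 ≤ g y} :=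
  stmt_9_general X g hg
end

section
/- Let A be an affine subspace of R^n, a ∈ A, and let W ⊆ R^n be a Borel set invariant under every transformation y ↦ δ(y − a*) + a** with δ ≠ 0 and a*, a** ∈ A (the group G(A)). Then for every symmetric positive definite n×n matrix Σ and all σ, τ ∈ (0, ∞) and all a', a'' ∈ A, one has P_{a', σ²Σ}(W) = P_{a'', τ²Σ}(W), i.e., the Gaussian rejection probability of W does not depend on the scale σ nor on the choice of mean within A. -/
open Matrix MeasureTheory

/-!
The map `T y = (σ / τ) • (y - a'') + a'` belongs to `G(A)`, so `T ⁻¹' W = W`, and an affine change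
of variables shows that `T` pushes `N(a'', τ² Σ)` forward to `N(a', σ² Σ)`. Hence
`N(a', σ² Σ)(W) = N(a'', τ² Σ)(T ⁻¹' W) = N(a'', τ² Σ)(W)`.
-/

theorem Matrix.inv_smul_of_ne_zero {ι K : Type*} [Fintype ι] [DecidableEq ι] [Field K]
    (A : Matrix ι ι K) {c : K} (hc : c ≠ 0) : (c • A)⁻¹ = c⁻¹ • A⁻¹ := by
  by_cases hA : IsUnit A.det
  · exact inv_smul' (A := A) (Units.mk0 c hc) hA
  · have hcA : ¬IsUnit (c • A).det := by
      simpa [det_smul, isUnit_iff_ne_zero, hc] using hA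
    simp [nonsing_inv_apply_not_isUnit _ hA, nonsing_inv_apply_not_isUnit _ hcA]

section Affine

variable {E : Type*} [NormedAddCommGroup E] [NormedSpace ℝ E] [MeasurableSpace E] [BorelSpace E]

theorem measurableEmbedding_smul_sub_add {c : ℝ} (hc : c ≠ 0) (b m : E) :
    MeasurableEmbedding fun x => c • (x - b) + m :=
  ((Homeomorph.subRight b).trans ((Homeomorph.smulOfNeZero c hc).trans
    (Homeomorph.addRight m))).measurableEmbedding

theorem MeasureTheory.Measure.map_smul_sub_add_addHaar [FiniteDimensional ℝ E] (μ : Measure E)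
    [μ.IsAddHaarMeasure] {c : ℝ} (hc : c ≠ 0) (b m : E) :
    μ.map (fun x => c • (x - b) + m) = ENNReal.ofReal |(c ^ Module.finrank ℝ E)⁻¹| • μ := by
  have hT : (fun x => c • (x - b) + m) = ((· + m) ∘ (c • ·)) ∘ (· + -b) := by
    funext x; simp [sub_eq_add_neg]
  rw [hT, ← map_map (by fun_prop) (by fun_prop), map_add_right_eq_self,
    ← map_map (by fun_prop) (by fun_prop), map_addHaar_smul μ hc, Measure.map_smul,
    map_add_right_eq_self]

end Affine

namespace gaussianMeasure

variable {n : ℕ}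

noncomputable def pdf (μ : Fin n → ℝ) (S : Matrix (Fin n) (Fin n) ℝ) (y : Fin n → ℝ) : ℝ :=
  Real.sqrt (((2 * Real.pi) ^ n * S.det)⁻¹) * Real.exp (-(1 / 2) * ((y - μ) ⬝ᵥ S⁻¹ *ᵥ (y - μ)))

theorem eq_withDensity_pdf (μ : Fin n → ℝ) (S : Matrix (Fin n) (Fin n) ℝ) :
    gaussianMeasure μ S = volume.withDensity fun y => ENNReal.ofReal (pdf μ S y) :=
  rfl

theorem continuous_pdf (μ : Fin n → ℝ) (S : Matrix (Fin n) (Fin n) ℝ) :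
    Continuous (pdf μ S) := by
  unfold pdf; fun_prop

theorem sqrt_inv_det_sq_smul (S : Matrix (Fin n) (Fin n) ℝ) (c : ℝ) :
    Real.sqrt (((2 * Real.pi) ^ n * (c ^ 2 • S).det)⁻¹)
      = (|c| ^ n)⁻¹ * Real.sqrt (((2 * Real.pi) ^ n * S.det)⁻¹) := by
  rw [det_smul, Fintype.card_fin, ← pow_mul, mul_comm 2 n, pow_mul, ← sq_abs, abs_pow,
    mul_left_comm, mul_inv, Real.sqrt_mul (by positivity), ← inv_pow,
    Real.sqrt_sq (by positivity)]

theorem pdf_sq_smul_smul_sub_add (S : Matrix (Fin n) (Fin n) ℝ) {c : ℝ} (hc : c ≠ 0)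
    (b m x : Fin n → ℝ) :
    pdf m (c ^ 2 • S) (c • (x - b) + m) = (|c| ^ n)⁻¹ * pdf b S x := by
  have hquad : (c • (x - b)) ⬝ᵥ ((c ^ 2)⁻¹ • S⁻¹) *ᵥ (c • (x - b))
      = (x - b) ⬝ᵥ S⁻¹ *ᵥ (x - b) := by
    simp only [smul_mulVec, mulVec_smul, dotProduct_smul, smul_dotProduct, smul_eq_mul]
    field_simp
  rw [pdf, pdf, add_sub_cancel_right, sqrt_inv_det_sq_smul,
    inv_smul_of_ne_zero _ (by positivity), hquad, mul_assoc]

theorem map_smul_sub_add (S : Matrix (Fin n) (Fin n) ℝ) {c : ℝ} (hc : c ≠ 0)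
    (b m : Fin n → ℝ) :
    (gaussianMeasure b S).map (fun x => c • (x - b) + m) = gaussianMeasure m (c ^ 2 • S) := by
  set T : (Fin n → ℝ) → (Fin n → ℝ) := fun x => c • (x - b) + m
  have hT : Measurable T := (measurableEmbedding_smul_sub_add hc b m).measurable
  have hcn : ENNReal.ofReal |c ^ n| * ENNReal.ofReal |(c ^ n)⁻¹| = 1 := by
    rw [← ENNReal.ofReal_mul (abs_nonneg _), ← abs_mul, mul_inv_cancel₀ (pow_ne_zero n hc),
      abs_one, ENNReal.ofReal_one]
  ext s hs
  set f : (Fin n → ℝ) → ENNReal := fun y => ENNReal.ofReal (pdf m (c ^ 2 • S) y)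
  have hf : Measurable f := (continuous_pdf m _).measurable.ennreal_ofReal
  calc (gaussianMeasure b S).map T s
      = ∫⁻ x in T ⁻¹' s, ENNReal.ofReal (pdf b S x) := by
        rw [Measure.map_apply hT hs, eq_withDensity_pdf, withDensity_apply _ (hT hs)]
    _ = ∫⁻ x in T ⁻¹' s, ENNReal.ofReal |c ^ n| * f (T x) := by
        refine setLIntegral_congr_fun (hT hs) fun x _ => ?_
        rw [← ENNReal.ofReal_mul (abs_nonneg _), pdf_sq_smul_smul_sub_add S hc, abs_pow,
          mul_inv_cancel_left₀ (by positivity)]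
    _ = ENNReal.ofReal |c ^ n| * ∫⁻ y in s, f y ∂(volume.map T) := by
        rw [lintegral_const_mul _ (show Measurable fun x => f (T x) from hf.comp hT),
          setLIntegral_map hs hf hT]
    _ = gaussianMeasure m (c ^ 2 • S) s := by
        rw [Measure.map_smul_sub_add_addHaar volume hc, Module.finrank_fin_fun,
          Measure.restrict_smul, lintegral_smul_measure, smul_eq_mul, ← mul_assoc, hcn,
          one_mul, eq_withDensity_pdf, withDensity_apply _ hs]

end gaussianMeasure

theorem stmt_10_general {n : ℕ} (A : Set (Fin n → ℝ)) (W : Set (Fin n → ℝ))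
    (hinv : ∀ (δ : ℝ), δ ≠ 0 → ∀ a₁ ∈ A, ∀ a₂ ∈ A, ∀ y : Fin n → ℝ,
      (δ • (y - a₁) + a₂ ∈ W ↔ y ∈ W)) :
    ∀ (S : Matrix (Fin n) (Fin n) ℝ), S.PosDef →
      ∀ (σ τ : ℝ), 0 < σ → 0 < τ → ∀ a' ∈ A, ∀ a'' ∈ A,
        gaussianMeasure a' (σ ^ 2 • S) W = gaussianMeasure a'' (τ ^ 2 • S) W := by
  intro S _ σ τ hσ hτ a' ha' a'' ha''
  have hc : σ / τ ≠ 0 := (div_pos hσ hτ).ne'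
  have hW : (fun y => (σ / τ) • (y - a'') + a') ⁻¹' W = W :=
    Set.ext (hinv _ hc a'' ha'' a' ha')
  have hscale : (σ / τ) ^ 2 • τ ^ 2 • S = σ ^ 2 • S := by
    rw [smul_smul, div_pow, div_mul_cancel₀ _ (pow_ne_zero 2 hτ.ne')]
  rw [← hscale, ← gaussianMeasure.map_smul_sub_add _ hc,
    (measurableEmbedding_smul_sub_add hc a'' a').map_apply, hW]

theorem stmt_10 {n : ℕ} (a : Fin n → ℝ) (V : Submodule ℝ (Fin n → ℝ))
    (A : Set (Fin n → ℝ)) (hA : A = {x | x - a ∈ V})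
    (W : Set (Fin n → ℝ)) (hW : MeasurableSet W)
    (hinv : ∀ (δ : ℝ), δ ≠ 0 → ∀ a₁ ∈ A, ∀ a₂ ∈ A, ∀ y : Fin n → ℝ,
      (δ • (y - a₁) + a₂ ∈ W ↔ y ∈ W)) :
    ∀ (S : Matrix (Fin n) (Fin n) ℝ), S.PosDef →
      ∀ (σ τ : ℝ), 0 < σ → 0 < τ → ∀ a' ∈ A, ∀ a'' ∈ A,
        gaussianMeasure a' (σ ^ 2 • S) W = gaussianMeasure a'' (τ ^ 2 • S) W :=
  stmt_10_general A W hinv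
end

section
/- For ω ∈ [0, π] and integer s ≥ 0 let E_{n,s}(ω) be the n×2 matrix with j-th row (j^s cos(jω), j^s sin(jω)). Let L be a linear subspace of R^n with dim(L) < n. Then the set {s ∈ N ∪ {0} : span(E_{n,s}(ω)) ⊄ L} is nonempty; that is, the quantity ρ(ω, L) = min{s ≥ 0 : span(E_{n,s}(ω)) ⊄ L} is well defined. -/
/-!
If every `span(E_{n,s}(ω))` lay in `L`, so would their sum, and a nonzero functional `w` vanishing
on `L` would satisfy `∑ⱼ wⱼ jˢ cos(jω) = ∑ⱼ wⱼ jˢ sin(jω) = 0` for all `s`. Combined into one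
complex identity this reads `∑ⱼ (wⱼ e^{ijω}) jˢ = 0`, a Vandermonde system in the distinct
nodes `1, …, n`, so `wⱼ e^{ijω} = 0` for all `j` and `w = 0`.
-/

open Matrix

/-- The `n × 2` matrix `E_{n,s}(ω)` with `j`-th row `(j^s cos(jω), j^s sin(jω))`, `j = 1,…,n`. -/
noncomputable def Ens (n s : ℕ) (ω : ℝ) : Matrix (Fin n) (Fin 2) ℝ :=
  fun j i =>
    if i = 0 then ((j.val + 1 : ℕ) : ℝ) ^ s * Real.cos (((j.val + 1 : ℕ) : ℝ) * ω)
    else ((j.val + 1 : ℕ) : ℝ) ^ s * Real.sin (((j.val + 1 : ℕ) : ℝ) * ω)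

open Complex in
theorem vecMul_Ens_zero_add_vecMul_Ens_one_mul_I {n : ℕ} (s : ℕ) (ω : ℝ) (w : Fin n → ℝ) :
    ((w ᵥ* Ens n s ω) 0 : ℂ) + ((w ᵥ* Ens n s ω) 1 : ℂ) * I =
      ∑ j, (w j * exp (((j.val + 1 : ℕ) * ω : ℝ) * I)) * ((j.val + 1 : ℕ) : ℂ) ^ s := by
  simp only [vecMul, dotProduct, Ens, ofReal_sum, Finset.sum_mul, ← Finset.sum_add_distrib]
  refine Finset.sum_congr rfl fun j _ => ?_
  rw [exp_mul_I, ← ofReal_cos, ← ofReal_sin]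
  push_cast
  ring

theorem eq_zero_of_forall_vecMul_Ens_eq_zero {n : ℕ} {ω : ℝ} {w : Fin n → ℝ}
    (hw : ∀ s, w ᵥ* Ens n s ω = 0) : w = 0 := by
  have hc := eq_zero_of_forall_pow_sum_mul_pow_eq_zero
    (v := fun j : Fin n => (w j : ℂ) * Complex.exp (((j.val + 1 : ℕ) * ω : ℝ) * Complex.I))
    (f := fun j : Fin n => ((j.val + 1 : ℕ) : ℂ))
    (fun a b hab => Fin.ext (by simpa using hab))
    (fun s => by rw [← vecMul_Ens_zero_add_vecMul_Ens_one_mul_I, hw]; simp)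
  funext j
  simpa [Complex.exp_ne_zero] using congrFun hc j

theorem iSup_range_Ens_mulVecLin (n : ℕ) (ω : ℝ) :
    ⨆ s, LinearMap.range (Ens n s ω).mulVecLin = ⊤ := by
  by_contra h
  obtain ⟨φ, hφ, hker⟩ := Submodule.exists_le_ker_of_lt_top _ (lt_top_iff_ne_top.2 h)
  obtain ⟨w, rfl⟩ := (dotProductEquiv ℝ (Fin n)).surjective φ
  have hw : ∀ s, w ᵥ* Ens n s ω = 0 := fun s => by
    ext i
    have hcol : (Ens n s ω).mulVecLin (Pi.single i 1) ∈ LinearMap.ker (dotProductEquiv ℝ _ w) :=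
      hker (Submodule.mem_iSup_of_mem s (LinearMap.mem_range_self _ _))
    rwa [LinearMap.mem_ker, dotProductEquiv_apply_apply, mulVecLin_apply, dotProduct_mulVec,
      dotProduct_single_one] at hcol
  exact hφ (by rw [eq_zero_of_forall_vecMul_Ens_eq_zero hw, map_zero])

theorem stmt_14_general {n : ℕ} (L : Submodule ℝ (Fin n → ℝ)) (hL : Module.finrank ℝ L < n)
    (ω : ℝ) :
    {s : ℕ | ¬ LinearMap.range (Ens n s ω).mulVecLin ≤ L}.Nonempty := by
  suffices ¬ ∀ s, LinearMap.range (Ens n s ω).mulVecLin ≤ L by simpa [Set.Nonempty] using this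
  intro h
  have hLtop : L = ⊤ := eq_top_iff.2 (iSup_range_Ens_mulVecLin n ω ▸ iSup_le h)
  rw [hLtop, finrank_top, Module.finrank_fin_fun] at hL
  exact lt_irrefl n hL

theorem stmt_14 {n : ℕ} (L : Submodule ℝ (Fin n → ℝ)) (hL : Module.finrank ℝ L < n)
    (ω : ℝ) (hω : ω ∈ Set.Icc 0 Real.pi) :
    {s : ℕ | ¬ LinearMap.range (Ens n s ω).mulVecLin ≤ L}.Nonempty :=
  stmt_14_general L hL ω
end
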